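/- arXiv:2202.04739 — 2 statements merged into one kernel-verified Lean document; each statement's English description precedes it below -/
import Mathlib

section
/- The deconcatenation coproduct Δ_decon is an algebra homomorphism with respect to the generalised quasi-shuffle product: for all u, v ∈ ℚ⟨Z⟩, Δ_decon(u ⋆ v) = Δ_decon(u) (⋆⊗⋆) Δ_decon(v). -/
/-!
Deconcatenation satisfies `Δ(a w) = 1 ⊗ a w + (a ⊗ 1) Δ(w)` and
`Δ(L_c w) = 1 ⊗ L_c w + (L_c ⊗ id) Δ(w)`, while `⋆⊗⋆` obeys in its left tensor factor the
same recursion as `⋆`: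
`((a ⊗ 1) P)((b ⊗ 1) Q) = (a ⊗ 1)(P ((b ⊗ 1) Q)) + (b ⊗ 1)(((a ⊗ 1) P) Q) − (L_{a◊b} ⊗ id)(P Q)`,
with `(1 ⊗ A)(1 ⊗ B) = 1 ⊗ (A ⋆ B)` and left multiplication by `a ⊗ 1` passing through a factor
`1 ⊗ A`. Expanding `Δ(au ⋆ bv)` by the recursion of `⋆` and `Δ(au) (⋆⊗⋆) Δ(bv)` by that of `Δ`,
the identity for `(au, bv)` reduces to the identities for `(u, bv)`, `(au, v)` and `(u, v)`.
-/

/-- Noncommutative polynomials ℚ⟨Z⟩, as finitely supported functions on words. -/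
abbrev QW (Z : Type*) := List Z →₀ ℚ

/-- Prepend a letter to every word of a polynomial: `a·p`. -/
noncomputable def pre {Z : Type*} (a : Z) (p : QW Z) : QW Z :=
  Finsupp.mapDomain (a :: ·) p

/-- `Lw D c w` is `L_c(w)`: for `w = x t`, it is `(c ◊ x) t`, and `L_c(1) = 0`. -/
noncomputable def Lw {Z : Type*} (D : (Z →₀ ℚ) →ₗ[ℚ] (Z →₀ ℚ) →ₗ[ℚ] (Z →₀ ℚ))
    (c : Z →₀ ℚ) : List Z → QW Z
  | [] => 0
  | x :: t => (D c (Finsupp.single x 1)).sum fun b r => Finsupp.single (b :: t) r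

/-- Linear extension of `L_c` to ℚ⟨Z⟩. -/
noncomputable def Lmap {Z : Type*} (D : (Z →₀ ℚ) →ₗ[ℚ] (Z →₀ ℚ) →ₗ[ℚ] (Z →₀ ℚ))
    (c : Z →₀ ℚ) (p : QW Z) : QW Z :=
  p.sum fun w r => r • Lw D c w

/-- The generalised quasi-shuffle product of two words:
`(au) ⋆ (bv) = a(u ⋆ bv) + b(au ⋆ v) − L_{a◊b}(u ⋆ v)`. -/
noncomputable def star {Z : Type*} (D : (Z →₀ ℚ) →ₗ[ℚ] (Z →₀ ℚ) →ₗ[ℚ] (Z →₀ ℚ)) :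
    List Z → List Z → QW Z
  | [], v => Finsupp.single v 1
  | u, [] => Finsupp.single u 1
  | a :: u, b :: v =>
      pre a (star D u (b :: v)) + pre b (star D (a :: u) v)
        - Lmap D (D (Finsupp.single a 1) (Finsupp.single b 1)) (star D u v)
  termination_by u v => u.length + v.length

/-- Bilinear extension of `star` to ℚ⟨Z⟩. -/
noncomputable def starP {Z : Type*} (D : (Z →₀ ℚ) →ₗ[ℚ] (Z →₀ ℚ) →ₗ[ℚ] (Z →₀ ℚ))
    (p q : QW Z) : QW Z :=
  p.sum fun u r => q.sum fun v s => (r * s) • star D u v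

/- STATEMENT 8: the deconcatenation coproduct is an algebra homomorphism for the
generalised quasi-shuffle product: Δ(u ⋆ v) = Δ(u) (⋆⊗⋆) Δ(v). The tensor product
ℚ⟨Z⟩ ⊗ ℚ⟨Z⟩ is modelled as finitely supported functions on pairs of words. -/

/-- Deconcatenation coproduct of a word. -/
noncomputable def deconW {Z : Type*} (w : List Z) : (List Z × List Z) →₀ ℚ :=
  ∑ k ∈ Finset.range (w.length + 1), Finsupp.single (w.take k, w.drop k) 1

/-- Linear extension of the deconcatenation coproduct. -/
noncomputable def decon {Z : Type*} (p : QW Z) : (List Z × List Z) →₀ ℚ :=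
  p.sum fun w r => r • deconW w

/-- Elementary tensor of two polynomials. -/
noncomputable def tens {Z : Type*} (p q : QW Z) : (List Z × List Z) →₀ ℚ :=
  p.sum fun u r => q.sum fun v s => Finsupp.single (u, v) (r * s)

/-- The componentwise product (⋆⊗⋆) on ℚ⟨Z⟩ ⊗ ℚ⟨Z⟩:
`(u₁⊗v₁)(u₂⊗v₂) = (u₁⋆u₂)⊗(v₁⋆v₂)`. -/
noncomputable def tensStar {Z : Type*} (D : (Z →₀ ℚ) →ₗ[ℚ] (Z →₀ ℚ) →ₗ[ℚ] (Z →₀ ℚ))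
    (P Q : (List Z × List Z) →₀ ℚ) : (List Z × List Z) →₀ ℚ :=
  P.sum fun x r => Q.sum fun y s => (r * s) • tens (star D x.1 y.1) (star D x.2 y.2)

open Finsupp

section Bilinear

variable {α β M : Type*} [AddCommMonoid M] [Module ℚ M]

noncomputable def bilinExt (f : α → β → M) : (α →₀ ℚ) →ₗ[ℚ] (β →₀ ℚ) →ₗ[ℚ] M :=
  linearCombination ℚ fun x => linearCombination ℚ (f x)

lemma bilinExt_apply (f : α → β → M) (p : α →₀ ℚ) (q : β →₀ ℚ) :
    bilinExt f p q = p.sum fun x r => q.sum fun y s => (r * s) • f x y := by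
  simp only [bilinExt, linearCombination_apply, LinearMap.finsupp_sum_apply,
    LinearMap.smul_apply, smul_sum, smul_smul]

@[simp]
lemma bilinExt_single (f : α → β → M) (x : α) (y : β) (r s : ℚ) :
    bilinExt f (single x r) (single y s) = (r * s) • f x y := by
  simp [bilinExt, smul_smul]

end Bilinear

abbrev QW₂ (Z : Type*) := (List Z × List Z) →₀ ℚ

section Linearised

variable {Z : Type*} (D : (Z →₀ ℚ) →ₗ[ℚ] (Z →₀ ℚ) →ₗ[ℚ] (Z →₀ ℚ))

noncomputable def preLin (a : Z) : QW Z →ₗ[ℚ] QW Z := lmapDomain ℚ ℚ (a :: ·)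

noncomputable def LmapLin (c : Z →₀ ℚ) : QW Z →ₗ[ℚ] QW Z := linearCombination ℚ (Lw D c)

noncomputable def deconLin : QW Z →ₗ[ℚ] QW₂ Z := linearCombination ℚ deconW

noncomputable def tensLin : QW Z →ₗ[ℚ] QW Z →ₗ[ℚ] QW₂ Z := bilinExt fun u v => single (u, v) 1

noncomputable def starLin : QW Z →ₗ[ℚ] QW Z →ₗ[ℚ] QW Z := bilinExt (star D)

noncomputable def tensStarLin : QW₂ Z →ₗ[ℚ] QW₂ Z →ₗ[ℚ] QW₂ Z :=
  bilinExt fun x y => tensLin (star D x.1 y.1) (star D x.2 y.2)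

lemma pre_eq_preLin (a : Z) (p : QW Z) : pre a p = preLin a p := rfl

lemma Lmap_eq_LmapLin (c : Z →₀ ℚ) (p : QW Z) : Lmap D c p = LmapLin D c p :=
  (linearCombination_apply ℚ p).symm

lemma decon_eq_deconLin (p : QW Z) : decon p = deconLin p :=
  (linearCombination_apply ℚ p).symm

lemma tens_eq_tensLin (p q : QW Z) : tens p q = tensLin p q := by
  simp only [tens, tensLin, bilinExt_apply, smul_single', mul_one]

lemma starP_eq_starLin (p q : QW Z) : starP D p q = starLin D p q :=
  (bilinExt_apply _ p q).symm

lemma tensStar_eq_tensStarLin (P Q : QW₂ Z) : tensStar D P Q = tensStarLin D P Q := by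
  simp only [tensStar, tensStarLin, bilinExt_apply, tens_eq_tensLin]

@[simp]
lemma preLin_single (a : Z) (u : List Z) (r : ℚ) :
    preLin a (single u r) = single (a :: u) r := by
  simp [preLin]

@[simp]
lemma LmapLin_single (c : Z →₀ ℚ) (w : List Z) (r : ℚ) :
    LmapLin D c (single w r) = r • Lw D c w := by
  simp [LmapLin]

@[simp]
lemma deconLin_single (w : List Z) (r : ℚ) : deconLin (single w r) = r • deconW w := by
  simp [deconLin]

@[simp]
lemma tensLin_single_single (u v : List Z) (r s : ℚ) :
    tensLin (single u r) (single v s) = (r * s) • single (u, v) 1 := by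
  simp [tensLin]

@[simp]
lemma starLin_single_single (u v : List Z) (r s : ℚ) :
    starLin D (single u r) (single v s) = (r * s) • star D u v := by
  simp [starLin]

@[simp]
lemma tensStarLin_single_single (x y : List Z × List Z) (r s : ℚ) :
    tensStarLin D (single x r) (single y s)
      = (r * s) • tensLin (star D x.1 y.1) (star D x.2 y.2) := by
  simp [tensStarLin]

end Linearised

section TensorSide

variable {Z : Type*} (D : (Z →₀ ℚ) →ₗ[ℚ] (Z →₀ ℚ) →ₗ[ℚ] (Z →₀ ℚ))

/- On `ℚ⟨Z⟩ ⊗ ℚ⟨Z⟩`: `oneTens q = 1 ⊗ q`, `preLeft a` is concatenation on the left by `a ⊗ 1`,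
and `LmapLeft c = L_c ⊗ id`. -/
noncomputable def oneTens : QW Z →ₗ[ℚ] QW₂ Z := lmapDomain ℚ ℚ fun v => ([], v)

noncomputable def preLeft (a : Z) : QW₂ Z →ₗ[ℚ] QW₂ Z :=
  lmapDomain ℚ ℚ fun x => (a :: x.1, x.2)

noncomputable def LmapLeft (c : Z →₀ ℚ) : QW₂ Z →ₗ[ℚ] QW₂ Z :=
  linearCombination ℚ fun x => tensLin (Lw D c x.1) (single x.2 1)

@[simp]
lemma oneTens_single (v : List Z) (r : ℚ) : oneTens (single v r) = single ([], v) r := by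
  simp [oneTens]

@[simp]
lemma preLeft_single (a : Z) (x : List Z × List Z) (r : ℚ) :
    preLeft a (single x r) = single (a :: x.1, x.2) r := by
  simp [preLeft]

@[simp]
lemma LmapLeft_single (c : Z →₀ ℚ) (x : List Z × List Z) (r : ℚ) :
    LmapLeft D c (single x r) = r • tensLin (Lw D c x.1) (single x.2 1) := by
  simp [LmapLeft]

lemma tensLin_nil_left (q : QW Z) : tensLin (single [] 1) q = oneTens q := by
  induction q using Finsupp.induction_linear <;> simp_all

lemma preLeft_tensLin (a : Z) (p q : QW Z) :
    preLeft a (tensLin p q) = tensLin (preLin a p) q := by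
  induction p using Finsupp.induction_linear <;> induction q using Finsupp.induction_linear <;>
    simp_all [-single_mul]

lemma LmapLeft_tensLin (c : Z →₀ ℚ) (p q : QW Z) :
    LmapLeft D c (tensLin p q) = tensLin (LmapLin D c p) q := by
  induction p using Finsupp.induction_linear with
  | zero => simp
  | add p₁ p₂ h₁ h₂ => simp [h₁, h₂]
  | single u r =>
    induction q using Finsupp.induction_linear with
    | zero => simp
    | add q₁ q₂ h₁ h₂ => simp [h₁, h₂]
    | single v s =>
      rw [← smul_single_one v s]
      simp only [map_smul, LinearMap.smul_apply, tensLin_single_single, LmapLeft_single,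
        LmapLin_single, smul_smul, mul_one, mul_comm]

end TensorSide

section Deconcatenation

variable {Z : Type*} (D : (Z →₀ ℚ) →ₗ[ℚ] (Z →₀ ℚ) →ₗ[ℚ] (Z →₀ ℚ))

lemma deconW_nil : deconW ([] : List Z) = single ([], []) 1 := by
  simp [deconW]

lemma deconW_cons (a : Z) (w : List Z) :
    deconW (a :: w) = single ([], a :: w) 1 + preLeft a (deconW w) := by
  rw [deconW, List.length_cons, Finset.sum_range_succ', add_comm, deconW, map_sum]
  simp

lemma deconLin_preLin (a : Z) (p : QW Z) :
    deconLin (preLin a p) = oneTens (preLin a p) + preLeft a (deconLin p) := by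
  induction p using Finsupp.induction_linear with
  | zero => simp
  | add p₁ p₂ h₁ h₂ => simp only [map_add, h₁, h₂]; abel
  | single w r => simp [deconW_cons]

@[simp]
lemma Lw_nil (c : Z →₀ ℚ) : Lw D c [] = 0 := rfl

lemma Lw_cons (c : Z →₀ ℚ) (x : Z) (t : List Z) :
    Lw D c (x :: t) = (D c (single x 1)).sum fun b r => r • preLin b (single t 1) := by
  simp [Lw]

lemma LmapLeft_preLeft (c : Z →₀ ℚ) (x : Z) (P : QW₂ Z) :
    LmapLeft D c (preLeft x P) = (D c (single x 1)).sum fun b r => r • preLeft b P := by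
  induction P using Finsupp.induction_linear with
  | zero => simp
  | add P₁ P₂ h₁ h₂ => simp [h₁, h₂, sum_add]
  | single y s =>
    simp [-single_mul, Lw_cons, map_finsuppSum, LinearMap.finsupp_sum_apply, smul_sum,
      mul_comm]

lemma deconLin_Lw (c : Z →₀ ℚ) (w : List Z) :
    deconLin (Lw D c w) = oneTens (Lw D c w) + LmapLeft D c (deconW w) := by
  cases w with
  | nil => simp [deconW_nil]
  | cons x t =>
    simp [Lw_cons, deconW_cons, LmapLeft_preLeft, map_finsuppSum, sum_add]

lemma deconLin_LmapLin (c : Z →₀ ℚ) (p : QW Z) :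
    deconLin (LmapLin D c p) = oneTens (LmapLin D c p) + LmapLeft D c (deconLin p) := by
  induction p using Finsupp.induction_linear with
  | zero => simp
  | add p₁ p₂ h₁ h₂ => simp only [map_add, h₁, h₂]; abel
  | single w r => simp [deconLin_Lw]

end Deconcatenation

section StarRecursion

variable {Z : Type*} (D : (Z →₀ ℚ) →ₗ[ℚ] (Z →₀ ℚ) →ₗ[ℚ] (Z →₀ ℚ))

@[simp]
lemma star_nil_left (v : List Z) : star D [] v = single v 1 := by
  rw [_root_.star]

@[simp]
lemma star_nil_right (u : List Z) : star D u [] = single u 1 := by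
  cases u <;> simp [_root_.star]

lemma star_cons_cons (a b : Z) (u v : List Z) :
    star D (a :: u) (b :: v) =
      preLin a (star D u (b :: v)) + preLin b (star D (a :: u) v)
        - LmapLin D (D (single a 1) (single b 1)) (star D u v) := by
  rw [_root_.star, pre_eq_preLin, pre_eq_preLin, Lmap_eq_LmapLin]

lemma tensStarLin_unit_left (Q : QW₂ Z) : tensStarLin D (single ([], []) 1) Q = Q := by
  induction Q using Finsupp.induction_linear <;> simp_all [-single_mul]

lemma tensStarLin_unit_right (P : QW₂ Z) : tensStarLin D P (single ([], []) 1) = P := by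
  induction P using Finsupp.induction_linear <;> simp_all [-single_mul]

lemma tensStarLin_oneTens_oneTens (A B : List Z) :
    tensStarLin D (single ([], A) 1) (single ([], B) 1) = oneTens (star D A B) := by
  simp [tensLin_nil_left]

lemma tensStarLin_preLeft_oneTens (a : Z) (B : List Z) (P : QW₂ Z) :
    tensStarLin D (preLeft a P) (single ([], B) 1)
      = preLeft a (tensStarLin D P (single ([], B) 1)) := by
  induction P using Finsupp.induction_linear <;> simp_all [-single_mul, preLeft_tensLin]

lemma tensStarLin_oneTens_preLeft (b : Z) (A : List Z) (Q : QW₂ Z) :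
    tensStarLin D (single ([], A) 1) (preLeft b Q)
      = preLeft b (tensStarLin D (single ([], A) 1) Q) := by
  induction Q using Finsupp.induction_linear <;> simp_all [-single_mul, preLeft_tensLin]

lemma tensStarLin_preLeft_preLeft (a b : Z) (P Q : QW₂ Z) :
    tensStarLin D (preLeft a P) (preLeft b Q)
      = preLeft a (tensStarLin D P (preLeft b Q)) + preLeft b (tensStarLin D (preLeft a P) Q)
        - LmapLeft D (D (single a 1) (single b 1)) (tensStarLin D P Q) := by
  induction P using Finsupp.induction_linear with
  | zero => simp
  | add P₁ P₂ h₁ h₂ => simp only [map_add, LinearMap.add_apply, h₁, h₂]; abel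
  | single x r =>
    induction Q using Finsupp.induction_linear with
    | zero => simp
    | add Q₁ Q₂ h₁ h₂ => simp only [map_add, h₁, h₂]; abel
    | single y s =>
      simp only [preLeft_single, tensStarLin_single_single, star_cons_cons, map_smul, map_sub,
        map_add, LinearMap.sub_apply, LinearMap.add_apply, preLeft_tensLin, LmapLeft_tensLin,
        smul_sub, smul_add]

lemma deconLin_star :
    ∀ u v : List Z, deconLin (star D u v) = tensStarLin D (deconW u) (deconW v)
  | [], v => by simp [deconW_nil, tensStarLin_unit_left]
  | a :: u, [] => by simp [deconW_nil, tensStarLin_unit_right]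
  | a :: u, b :: v => by
    have ih₁ := deconLin_star u (b :: v)
    have ih₂ := deconLin_star (a :: u) v
    have ih₃ := deconLin_star u v
    have hstar := congrArg oneTens (star_cons_cons D a b u v)
    rw [map_sub, map_add] at hstar
    rw [star_cons_cons, map_sub, map_add, deconLin_preLin, deconLin_preLin, deconLin_LmapLin,
      ih₁, ih₂, ih₃, deconW_cons a u, deconW_cons b v]
    simp only [map_add, LinearMap.add_apply, tensStarLin_oneTens_oneTens,
      tensStarLin_oneTens_preLeft, tensStarLin_preLeft_oneTens, tensStarLin_preLeft_preLeft, hstar]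
    abel
  termination_by u v => u.length + v.length

end StarRecursion

theorem decon_is_star_hom_general {Z : Type*}
    (D : (Z →₀ ℚ) →ₗ[ℚ] (Z →₀ ℚ) →ₗ[ℚ] (Z →₀ ℚ)) :
    ∀ p q : QW Z, decon (starP D p q) = tensStar D (decon p) (decon q) := by
  intro p q
  rw [starP_eq_starLin, decon_eq_deconLin, decon_eq_deconLin, decon_eq_deconLin,
    tensStar_eq_tensStarLin]
  induction p using Finsupp.induction_linear <;> induction q using Finsupp.induction_linear <;>
    simp_all [deconLin_star, smul_smul, mul_comm]

theorem decon_is_star_hom {Z : Type*}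
    (D : (Z →₀ ℚ) →ₗ[ℚ] (Z →₀ ℚ) →ₗ[ℚ] (Z →₀ ℚ))
    (hcomm : ∀ x y, D x y = D y x)
    (hassoc : ∀ x y z, D (D x y) z = D x (D y z)) :
    ∀ p q : QW Z, decon (starP D p q) = tensStar D (decon p) (decon q) :=
  decon_is_star_hom_general D
end

section
/- For every nonempty word z_{i₁}⋯z_{i_r} with r ≥ 2, the alternating sum ∑_{k=1}^{r-1} (−1)^{k+1} L_{z_{i_k} ◊ z_{i_{k+1}}}(z_{i_{k−1}}⋯z_{i₁} ⋆ z_{i_{k+2}}⋯z_{i_r}) vanishes in (ℚ⟨Z⟩, ⋆). -/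
/-!
Since `L_c ∘ L_{c'} = L_{c◊c'}`, one step of the recursion for `⋆` gives
`L_c(au ⋆ bv) = (c◊a)(u ⋆ bv) + (c◊b)(au ⋆ v) − L_{c◊a◊b}(u ⋆ v)`.
The sum is the two-letter case of an alternating sum in which a window of `w + 1` consecutive
letters slides along the word, the term at position `k` applying `L` of the ◊-product of the window
to the ⋆-product of the reversed letters before it and the letters after it. Expanding every term
this way, the first two pieces of neighbouring terms cancel, and the third pieces form the same
kind of sum with a window two letters wider, so the sum vanishes by induction.
-/

namespace QuasiShuffle

variable {Z : Type*} (D : (Z →₀ ℚ) →ₗ[ℚ] (Z →₀ ℚ) →ₗ[ℚ] (Z →₀ ℚ))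

noncomputable def prepend : (Z →₀ ℚ) →ₗ[ℚ] QW Z →ₗ[ℚ] QW Z :=
  Finsupp.linearCombination ℚ fun x => Finsupp.lmapDomain ℚ ℚ (x :: ·)

lemma pre_eq_prepend (a : Z) (p : QW Z) : pre a p = prepend (Finsupp.single a 1) p := by
  simp [prepend, pre, Finsupp.lmapDomain_apply]

lemma Lmap_eq_linearCombination (c : Z →₀ ℚ) :
    Lmap D c = Finsupp.linearCombination ℚ (Lw D c) :=
  funext fun p => (Finsupp.linearCombination_apply ℚ p).symm

lemma prepend_single_single (x : Z) (w : List Z) :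
    prepend (Finsupp.single x 1) (Finsupp.single w 1) = Finsupp.single (x :: w) (1 : ℚ) := by
  simp [prepend, Finsupp.lmapDomain_apply, Finsupp.mapDomain_single]

lemma Lw_cons (c : Z →₀ ℚ) (x : Z) (t : List Z) :
    Lw D c (x :: t) = prepend (D c (Finsupp.single x 1)) (Finsupp.single t 1) := by
  simp [Lw, prepend, Finsupp.linearCombination_apply, Finsupp.lmapDomain_apply,
    Finsupp.mapDomain_single, Finsupp.smul_single]

lemma Lmap_prepend (c b : Z →₀ ℚ) (p : QW Z) :
    Lmap D c (prepend b p) = prepend (D c b) p := by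
  rw [Lmap_eq_linearCombination]
  induction b using Finsupp.induction_linear with
  | zero => simp
  | add b b' hb hb' => simp [hb, hb']
  | single x s =>
    induction p using Finsupp.induction_linear with
    | zero => simp
    | add p p' hp hp' => simp_all
    | single w t =>
      rw [← Finsupp.smul_single_one x s, ← Finsupp.smul_single_one w t]
      simp only [map_smul, LinearMap.smul_apply, prepend_single_single,
        Finsupp.linearCombination_single, one_smul, Lw_cons]

lemma Lmap_Lmap (hassoc : ∀ x y z, D (D x y) z = D x (D y z)) (c c' : Z →₀ ℚ) (p : QW Z) :
    Lmap D c (Lmap D c' p) = Lmap D (D c c') p := by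
  induction p using Finsupp.induction_linear with
  | zero => simp [Lmap_eq_linearCombination]
  | add p p' hp hp' => simp_all [Lmap_eq_linearCombination]
  | single w s =>
    cases w with
    | nil => simp [Lmap_eq_linearCombination, Lw]
    | cons x t =>
      simp only [Lmap_eq_linearCombination, Finsupp.linearCombination_single, map_smul] at *
      rw [Lw_cons, Lw_cons, ← Lmap_eq_linearCombination, Lmap_prepend, hassoc]

lemma star_nil_left (v : List Z) : star D [] v = Finsupp.single v 1 := by
  rw [_root_.star]

lemma star_nil_right (u : List Z) : star D u [] = Finsupp.single u 1 := by
  cases u <;> rw [_root_.star]; simp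

lemma Lmap_star_cons_cons (hassoc : ∀ x y z, D (D x y) z = D x (D y z))
    (c : Z →₀ ℚ) (a b : Z) (u v : List Z) :
    Lmap D c (star D (a :: u) (b :: v)) =
      prepend (D c (Finsupp.single a 1)) (star D u (b :: v))
        + prepend (D c (Finsupp.single b 1)) (star D (a :: u) v)
        - Lmap D (D c (D (Finsupp.single a 1) (Finsupp.single b 1))) (star D u v) := by
  rw [_root_.star, pre_eq_prepend, pre_eq_prepend, Lmap_eq_linearCombination]
  simp only [map_sub, map_add, ← Lmap_eq_linearCombination, Lmap_prepend, Lmap_Lmap D hassoc]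

variable (i : ℕ → Z)

noncomputable def window : ℕ → ℕ → (Z →₀ ℚ)
  | k, 0 => Finsupp.single (i k) 1
  | k, w + 1 => D (window k w) (Finsupp.single (i (k + w + 1)) 1)

lemma window_succ_eq_left (hassoc : ∀ x y z, D (D x y) z = D x (D y z)) :
    ∀ w k, window D i k (w + 1) = D (Finsupp.single (i k) 1) (window D i (k + 1) w)
  | 0, _ => rfl
  | w + 1, k => by
    rw [window, window_succ_eq_left hassoc w k, hassoc, window,
      show k + (w + 1) + 1 = k + 1 + w + 1 by omega]

-- The letters of the word `i 0 ⋯ i (n + w)` on either side of the window `i k ⋯ i (k + w)`.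
noncomputable def outsideStar (n w k : ℕ) : QW Z :=
  star D ((List.range k).map i).reverse ((List.range' (k + w + 1) (n - k)).map i)

noncomputable def windowTerm (n w k : ℕ) : QW Z :=
  Lmap D (window D i k w) (outsideStar D i n w k)

lemma reverse_map_range_succ (k : ℕ) :
    ((List.range (k + 1)).map i).reverse = i k :: ((List.range k).map i).reverse := by
  simp [List.range_succ]

lemma windowTerm_zero (m w : ℕ) :
    windowTerm D i (m + 1) w 0 =
      prepend (window D i 0 (w + 1)) (outsideStar D i m (w + 1) 0) := by
  simp only [windowTerm, outsideStar, List.range_zero, List.map_nil, List.reverse_nil,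
    star_nil_left, Nat.sub_zero, List.range'_succ, List.map_cons, Lmap_eq_linearCombination,
    Finsupp.linearCombination_single, one_smul, Lw_cons]
  rfl

lemma windowTerm_last (hcomm : ∀ x y, D x y = D y x)
    (hassoc : ∀ x y z, D (D x y) z = D x (D y z)) (m w : ℕ) :
    windowTerm D i (m + 1) w (m + 1) =
      prepend (window D i m (w + 1)) (outsideStar D i m (w + 1) m) := by
  simp only [windowTerm, outsideStar, Nat.sub_self, List.range'_zero, List.map_nil,
    reverse_map_range_succ, star_nil_right, Lmap_eq_linearCombination,
    Finsupp.linearCombination_single, one_smul, Lw_cons]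
  rw [hcomm, ← window_succ_eq_left D i hassoc]

lemma windowTerm_succ (hcomm : ∀ x y, D x y = D y x)
    (hassoc : ∀ x y z, D (D x y) z = D x (D y z)) {m j : ℕ} (hj : j < m) (w : ℕ) :
    windowTerm D i (m + 1) w (j + 1) =
      prepend (window D i j (w + 1)) (outsideStar D i m (w + 1) j)
        + prepend (window D i (j + 1) (w + 1)) (outsideStar D i m (w + 1) (j + 1))
        - windowTerm D i (m - 1) (w + 2) j := by
  obtain ⟨l, rfl⟩ : ∃ l, m = j + 1 + l := ⟨m - (j + 1), by omega⟩
  simp only [windowTerm, outsideStar, reverse_map_range_succ,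
    show j + 1 + l + 1 - (j + 1) = l + 1 by omega, show j + 1 + l - j = l + 1 by omega,
    show j + 1 + l - (j + 1) = l by omega, show j + 1 + l - 1 - j = l by omega,
    show j + 1 + w + 1 = j + w + 2 by omega, show j + (w + 1) + 1 = j + w + 2 by omega,
    show j + 1 + (w + 1) + 1 = j + w + 3 by omega, show j + (w + 2) + 1 = j + w + 3 by omega,
    List.range'_succ, List.map_cons, Lmap_star_cons_cons D hassoc]
  have hleft : D (window D i (j + 1) w) (Finsupp.single (i j) 1) = window D i j (w + 1) := by
    rw [hcomm, window_succ_eq_left D i hassoc]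
  have hright : D (window D i (j + 1) w) (Finsupp.single (i (j + w + 2)) 1) =
      window D i (j + 1) (w + 1) := by
    rw [window, show j + 1 + w + 1 = j + w + 2 by omega]
  rw [hleft, hright, ← hassoc, hleft]
  rfl

noncomputable def alternatingWindowSum (n w : ℕ) : QW Z :=
  ∑ k ∈ Finset.range (n + 1), (-1 : ℚ) ^ k • windowTerm D i n w k

lemma alternatingWindowSum_succ (hcomm : ∀ x y, D x y = D y x)
    (hassoc : ∀ x y z, D (D x y) z = D x (D y z)) (m w : ℕ) :
    alternatingWindowSum D i (m + 1) w =
      ∑ j ∈ Finset.range m, (-1 : ℚ) ^ j • windowTerm D i (m - 1) (w + 2) j := by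
  set g : ℕ → QW Z := fun j =>
    (-1 : ℚ) ^ j • prepend (window D i j (w + 1)) (outsideStar D i m (w + 1) j)
  have hmid : ∀ j ∈ Finset.range m, (-1 : ℚ) ^ (j + 1) • windowTerm D i (m + 1) w (j + 1) =
      (g (j + 1) - g j) + (-1 : ℚ) ^ j • windowTerm D i (m - 1) (w + 2) j := by
    intro j hj
    rw [windowTerm_succ D i hcomm hassoc (Finset.mem_range.mp hj), pow_succ]
    module
  rw [alternatingWindowSum, Finset.sum_range_succ', Finset.sum_range_succ,
    Finset.sum_congr rfl hmid, Finset.sum_add_distrib, Finset.sum_range_sub,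
    windowTerm_zero, windowTerm_last D i hcomm hassoc]
  simp only [g, pow_succ]
  module

lemma alternatingWindowSum_eq_zero (hcomm : ∀ x y, D x y = D y x)
    (hassoc : ∀ x y z, D (D x y) z = D x (D y z)) : ∀ n w, alternatingWindowSum D i n w = 0
  | 0, w => by
    simp [alternatingWindowSum, windowTerm, outsideStar, star_nil_left,
      Lmap_eq_linearCombination, Lw]
  | 1, w => by simp [alternatingWindowSum_succ D i hcomm hassoc]
  | n + 2, w => by
    rw [alternatingWindowSum_succ D i hcomm hassoc]
    exact alternatingWindowSum_eq_zero hcomm hassoc n (w + 2)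

end QuasiShuffle

-- Letters are indexed from `0`: the word is `i 0 ⋯ i (r - 1)`.
theorem alternating_L_sum_vanishes {Z : Type*}
    (D : (Z →₀ ℚ) →ₗ[ℚ] (Z →₀ ℚ) →ₗ[ℚ] (Z →₀ ℚ))
    (hcomm : ∀ x y, D x y = D y x)
    (hassoc : ∀ x y z, D (D x y) z = D x (D y z))
    (r : ℕ) (hr : 2 ≤ r) (i : ℕ → Z) :
    ∑ k ∈ Finset.Icc 1 (r - 1),
      ((-1 : ℚ) ^ (k + 1)) •
        Lmap D (D (Finsupp.single (i (k - 1)) 1) (Finsupp.single (i k) 1))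
          (star D (((List.range (k - 1)).map i).reverse)
            ((List.range' (k + 1) (r - 1 - k)).map i)) = 0 := by
  obtain ⟨n, rfl⟩ : ∃ n, r = n + 2 := ⟨r - 2, by omega⟩
  rw [← QuasiShuffle.alternatingWindowSum_eq_zero D i hcomm hassoc n 1,
    QuasiShuffle.alternatingWindowSum,
    ← Finset.Ico_add_one_right_eq_Icc, Finset.sum_Ico_eq_sum_range]
  refine Finset.sum_congr (by simp) fun j _ => ?_
  rw [add_comm 1 j, Nat.add_sub_cancel, show n + 2 - 1 - (j + 1) = n - j by omega,
    pow_add _ j 2, neg_one_sq, mul_one]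
  rfl
end
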